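/- arXiv:2408.11437 — 2 statements merged into one kernel-verified Lean document; each statement's English description precedes it below -/
import Mathlib

section
/- Let X be a sequentially complete Hausdorff locally convex space, (T(t))_{t≥0} a strongly continuous locally equicontinuous semigroup on X with generator (A, D(A)), U a Hausdorff locally convex space and B ∈ L(U;X). If (T(t))_{t≥0} satisfies C-maximal regularity for (B,r) for some r > 0, then it satisfies C-maximal regularity for (B,r) for all r > 0. -/
open Filter Topology Set Classical
open scoped ENNReal

/-- A partition `a = d₀ < d₁ < ⋯ < dₙ = b` of the interval `[a,b]`. -/
structure IntervalPartition (a b : ℝ) where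
  n : ℕ
  points : ℕ → ℝ
  first_eq : points 0 = a
  last_eq : points n = b
  increasing : ∀ i, i < n → points i < points (i + 1)

section Defs

variable {X Y U : Type*}
variable [AddCommGroup X] [Module ℝ X] [UniformSpace X] [IsUniformAddGroup X] [ContinuousSMul ℝ X]
variable [AddCommGroup Y] [Module ℝ Y] [UniformSpace Y] [IsUniformAddGroup Y] [ContinuousSMul ℝ Y]
variable [AddCommGroup U] [Module ℝ U] [UniformSpace U] [IsUniformAddGroup U] [ContinuousSMul ℝ U]

/-- The semivariation `SV_{q,p}(α)` of `α : [a,b] → L(X;Y)` (value in `ℝ≥0∞`). -/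
noncomputable def SV (α : ℝ → X →L[ℝ] Y) (q : Seminorm ℝ Y) (p : Seminorm ℝ X)
    (a b : ℝ) : ℝ≥0∞ :=
  ⨆ (d : IntervalPartition a b) (x : ℕ → X) (_ : ∀ i, i < d.n → p (x i) ≤ 1),
    ENNReal.ofReal
      (q (∑ i ∈ Finset.range d.n,
        (α (d.points (i + 1)) (x i) - α (d.points i) (x i))))

/-- `α : [a,b] → L(X;Y)` is of bounded semivariation. -/
def BoundedSemivariation (α : ℝ → X →L[ℝ] Y) (a b : ℝ) : Prop :=
  ∀ q : Seminorm ℝ Y, Continuous ⇑q →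
    ∃ p : Seminorm ℝ X, Continuous ⇑p ∧ SV α q p a b < ⊤

/-- `y` is the Riemann–Stieltjes integral `∫_a^b f dα`. -/
def IsRSIntegral (α : ℝ → X →L[ℝ] Y) (f : ℝ → X) (a b : ℝ) (y : Y) : Prop :=
  ∀ q : Seminorm ℝ Y, Continuous ⇑q → ∀ ε : ℝ, 0 < ε → ∃ δ : ℝ, 0 < δ ∧
    ∀ (d : IntervalPartition a b) (c : ℕ → ℝ),
      (∀ i, i < d.n → d.points (i + 1) - d.points i < δ) →
      (∀ i, i < d.n → c i ∈ Set.Icc (d.points i) (d.points (i + 1))) →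
      q ((∑ i ∈ Finset.range d.n,
        (α (d.points (i + 1)) (f (c i)) - α (d.points i) (f (c i)))) - y) < ε

/-- The Riemann–Stieltjes integral `∫_a^b f dα` (junk value `0` if it does not exist). -/
noncomputable def RSIntegral (α : ℝ → X →L[ℝ] Y) (f : ℝ → X) (a b : ℝ) : Y :=
  if h : ∃ y, IsRSIntegral α f a b y then h.choose else 0

/-- `y` is the Riemann integral `∫_a^b f(s) ds`. -/
def IsRiemannIntegral (f : ℝ → X) (a b : ℝ) (y : X) : Prop :=
  ∀ q : Seminorm ℝ X, Continuous ⇑q → ∀ ε : ℝ, 0 < ε → ∃ δ : ℝ, 0 < δ ∧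
    ∀ (d : IntervalPartition a b) (c : ℕ → ℝ),
      (∀ i, i < d.n → d.points (i + 1) - d.points i < δ) →
      (∀ i, i < d.n → c i ∈ Set.Icc (d.points i) (d.points (i + 1))) →
      q ((∑ i ∈ Finset.range d.n, (d.points (i + 1) - d.points i) • f (c i)) - y) < ε

/-- The Riemann integral `∫_a^b f(s) ds` (junk value `0` if it does not exist). -/
noncomputable def riemannIntegral (f : ℝ → X) (a b : ℝ) : X :=
  if h : ∃ y, IsRiemannIntegral f a b y then h.choose else 0

/-- Sequential completeness: every Cauchy sequence converges. -/
def SequentiallyComplete (Z : Type*) [UniformSpace Z] : Prop :=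
  ∀ u : ℕ → Z, CauchySeq u → ∃ z, Filter.Tendsto u Filter.atTop (𝓝 z)

/-- A strongly continuous, locally equicontinuous semigroup. -/
def IsSCLESemigroup (T : ℝ → X →L[ℝ] X) : Prop :=
  T 0 = ContinuousLinearMap.id ℝ X ∧
  (∀ s t : ℝ, 0 ≤ s → 0 ≤ t → T (s + t) = (T s).comp (T t)) ∧
  (∀ x : X, ContinuousOn (fun t => T t x) (Set.Ici (0:ℝ))) ∧
  (∀ q : Seminorm ℝ X, Continuous ⇑q → ∀ t₀ : ℝ, 0 ≤ t₀ →
    ∃ p : Seminorm ℝ X, Continuous ⇑p ∧ ∃ C : ℝ, 0 ≤ C ∧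
      ∀ t ∈ Set.Icc (0:ℝ) t₀, ∀ x : X, q (T t x) ≤ C * p x)

/-- A strongly continuous, quasi-equicontinuous semigroup. -/
def IsSCQESemigroup (T : ℝ → X →L[ℝ] X) : Prop :=
  T 0 = ContinuousLinearMap.id ℝ X ∧
  (∀ s t : ℝ, 0 ≤ s → 0 ≤ t → T (s + t) = (T s).comp (T t)) ∧
  (∀ x : X, ContinuousOn (fun t => T t x) (Set.Ici (0:ℝ))) ∧
  (∃ ω : ℝ, ∀ q : Seminorm ℝ X, Continuous ⇑q →
    ∃ p : Seminorm ℝ X, Continuous ⇑p ∧ ∃ C : ℝ, 0 ≤ C ∧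
      ∀ t : ℝ, 0 ≤ t → ∀ x : X, q (Real.exp (-ω * t) • T t x) ≤ C * p x)

/-- The domain of the generator of a semigroup. -/
def genDomain (T : ℝ → X →L[ℝ] X) : Set X :=
  {x | ∃ y : X, Filter.Tendsto (fun t : ℝ => t⁻¹ • (T t x - x)) (𝓝[>] (0:ℝ)) (𝓝 y)}

/-- The generator of a semigroup (junk value `0` outside of its domain). -/
noncomputable def generator (T : ℝ → X →L[ℝ] X) (x : X) : X :=
  if h : ∃ y : X, Filter.Tendsto (fun t : ℝ => t⁻¹ • (T t x - x)) (𝓝[>] (0:ℝ)) (𝓝 y)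
  then h.choose else 0

/-- The convolution `(T∗f)(t) = ∫_0^t T(t-s) f(s) ds`. -/
noncomputable def sgConv (T : ℝ → X →L[ℝ] X) (f : ℝ → X) (t : ℝ) : X :=
  riemannIntegral (fun s => T (t - s) (f s)) 0 t

/-- `v` is the derivative of `u` at `t` within the set `s` (limit of difference quotients). -/
def HasDerivWithinSetLC (u : ℝ → X) (v : X) (s : Set ℝ) (t : ℝ) : Prop :=
  Filter.Tendsto (fun h : ℝ => h⁻¹ • (u (t + h) - u t))
    (𝓝[{h : ℝ | h ≠ 0 ∧ t + h ∈ s}] (0:ℝ)) (𝓝 v)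

/-- `u` is continuously differentiable on `s` with derivative `u'`. -/
def IsC1On (u u' : ℝ → X) (s : Set ℝ) : Prop :=
  ContinuousOn u s ∧ ContinuousOn u' s ∧ ∀ t ∈ s, HasDerivWithinSetLC u (u' t) s t

/-- `u` is a strict solution of `u' = Au + g` on `[0,r]`, `u(0) = x`. -/
def IsStrictSolution (T : ℝ → X →L[ℝ] X) (g : ℝ → X) (x : X) (r : ℝ) (u : ℝ → X) : Prop :=
  u 0 = x ∧ (∀ t ∈ Set.Icc (0:ℝ) r, u t ∈ genDomain T) ∧
  ∃ u' : ℝ → X, IsC1On u u' (Set.Icc (0:ℝ) r) ∧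
    ∀ t ∈ Set.Icc (0:ℝ) r, u' t = generator T (u t) + g t

/-- `(T(t))` satisfies C-maximal regularity for `(B,r)`. -/
def CMaxReg (T : ℝ → X →L[ℝ] X) (B : U →L[ℝ] X) (r : ℝ) : Prop :=
  ∀ f : ℝ → U, ContinuousOn f (Set.Icc (0:ℝ) r) →
    (∀ t ∈ Set.Icc (0:ℝ) r, sgConv T (fun s => B (f s)) t ∈ genDomain T) ∧
    ContinuousOn (fun t => generator T (sgConv T (fun s => B (f s)) t)) (Set.Icc (0:ℝ) r)

end Defs

/-!
The Riemann integral of a continuous function into a sequentially complete locally convex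
space exists and is additive over adjacent intervals. Splitting `∫₀ᵗ` at `ρ` and using the
semigroup law gives, for `ρ ≤ t ≤ 2ρ`,
`(T ∗ Bf)(t) = T(t - ρ) (T ∗ Bf)(ρ) + (T ∗ Bf(· + ρ))(t - ρ)`.
Since `T(t - ρ)` leaves `D(A)` invariant and commutes with `A`, C-maximal regularity on `[0, ρ]`
yields it on `[0, 2ρ]`. Doubling reaches every `r' ≤ 2ᵏ r`, and C-maximal regularity passes to
shorter intervals by extending `f` constantly.
-/

namespace IntervalPartition

variable {a b : ℝ}

section Basic

variable (d : IntervalPartition a b)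

lemma points_mono {i j : ℕ} (hij : i ≤ j) (hj : j ≤ d.n) : d.points i ≤ d.points j := by
  induction j, hij using Nat.le_induction with
  | base => exact le_rfl
  | succ k hik ih => exact (ih (by omega)).trans (d.increasing k (by omega)).le

lemma left_le_points {i : ℕ} (hi : i ≤ d.n) : a ≤ d.points i := by
  simpa only [d.first_eq] using d.points_mono (Nat.zero_le i) hi

lemma points_le_right {i : ℕ} (hi : i ≤ d.n) : d.points i ≤ b := by
  simpa only [d.last_eq] using d.points_mono hi le_rfl

lemma n_eq_zero (hab : b ≤ a) : d.n = 0 := by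
  by_contra h
  have h01 := d.increasing 0 (Nat.pos_of_ne_zero h)
  have h1n := d.points_mono (Nat.pos_of_ne_zero h) le_rfl
  rw [d.first_eq] at h01
  rw [d.last_eq] at h1n
  linarith

lemma mem_Icc_of_mem_piece {i : ℕ} (hi : i < d.n) {s : ℝ}
    (hs : s ∈ Icc (d.points i) (d.points (i + 1))) : s ∈ Icc a b :=
  ⟨(d.left_le_points hi.le).trans hs.1, hs.2.trans (d.points_le_right hi)⟩

noncomputable def uniform (hab : a < b) (n : ℕ) (hn : 0 < n) : IntervalPartition a b where
  n := n
  points i := a + i * ((b - a) / n)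
  first_eq := by simp
  last_eq := by field_simp; ring
  increasing i _ := by
    have hstep : 0 < (b - a) / n := div_pos (by linarith) (by exact_mod_cast hn)
    push_cast
    linarith

lemma uniform_points_sub (hab : a < b) {n : ℕ} (hn : 0 < n) (i : ℕ) :
    (uniform hab n hn).points (i + 1) - (uniform hab n hn).points i = (b - a) / n := by
  simp only [uniform]
  push_cast
  ring

lemma eventually_uniform_mesh_lt (hab : a < b) {δ : ℝ} (hδ : 0 < δ) :
    ∀ᶠ k : ℕ in atTop, ∀ i, (uniform hab (k + 1) k.succ_pos).points (i + 1)
      - (uniform hab (k + 1) k.succ_pos).points i < δ := by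
  obtain ⟨N, hN⟩ := exists_nat_gt ((b - a) / δ)
  filter_upwards [eventually_ge_atTop N] with k hk i
  rw [uniform_points_sub, div_lt_iff₀ (by positivity)]
  rw [div_lt_iff₀ hδ] at hN
  have : (N : ℝ) ≤ k := by exact_mod_cast hk
  push_cast
  nlinarith

lemma exists_mesh_lt (hab : a ≤ b) {δ : ℝ} (hδ : 0 < δ) :
    ∃ (d : IntervalPartition a b) (c : ℕ → ℝ),
      (∀ i, i < d.n → d.points (i + 1) - d.points i < δ) ∧
      (∀ i, i < d.n → c i ∈ Icc (d.points i) (d.points (i + 1))) := by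
  rcases hab.eq_or_lt with rfl | hlt
  · exact ⟨⟨0, fun _ => a, rfl, rfl, by simp⟩, fun _ => a, by simp, by simp⟩
  obtain ⟨k, hk⟩ := (eventually_uniform_mesh_lt hlt hδ).exists
  exact ⟨_, (uniform hlt (k + 1) k.succ_pos).points, fun i _ => hk i,
    fun i hi => ⟨le_rfl, ((uniform hlt _ _).increasing i hi).le⟩⟩

end Basic

section Append

def append {c : ℝ} (d₁ : IntervalPartition a c) (d₂ : IntervalPartition c b) :
    IntervalPartition a b where
  n := d₁.n + d₂.n
  points i := if i ≤ d₁.n then d₁.points i else d₂.points (i - d₁.n)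
  first_eq := by simp [d₁.first_eq]
  last_eq := by
    split_ifs with h
    · have h0 : d₂.n = 0 := by omega
      rw [h0, add_zero, d₁.last_eq, ← d₂.last_eq, h0, d₂.first_eq]
    · rw [Nat.add_sub_cancel_left, d₂.last_eq]
  increasing i hi := by
    split_ifs with h₁ h₂ h₂
    · exact d₁.increasing i (by omega)
    · rw [show i = d₁.n by omega, d₁.last_eq, Nat.add_sub_cancel_left]
      simpa [d₂.first_eq] using d₂.increasing 0 (by omega)
    · omega
    · rw [show i + 1 - d₁.n = i - d₁.n + 1 by omega]
      exact d₂.increasing _ (by omega)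

variable {c : ℝ} (d₁ : IntervalPartition a c) (d₂ : IntervalPartition c b)

lemma append_points_of_le {i : ℕ} (hi : i ≤ d₁.n) : (d₁.append d₂).points i = d₁.points i :=
  if_pos hi

lemma append_points_add (j : ℕ) : (d₁.append d₂).points (d₁.n + j) = d₂.points j := by
  by_cases hj : j = 0
  · rw [hj, add_zero, append_points_of_le _ _ le_rfl, d₁.last_eq, d₂.first_eq]
  · exact (if_neg (by omega)).trans (by rw [Nat.add_sub_cancel_left])

lemma forall_lt_append_n {P : ℕ → Prop} (h₁ : ∀ i, i < d₁.n → P i)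
    (h₂ : ∀ j, j < d₂.n → P (d₁.n + j)) : ∀ i, i < (d₁.append d₂).n → P i := by
  intro i hi
  rcases lt_or_ge i d₁.n with h | h
  · exact h₁ i h
  · obtain ⟨j, rfl⟩ := Nat.exists_eq_add_of_le h
    exact h₂ j (by simpa [append] using hi)

lemma append_mesh_lt {δ : ℝ} (hd₁ : ∀ i, i < d₁.n → d₁.points (i + 1) - d₁.points i < δ)
    (hd₂ : ∀ j, j < d₂.n → d₂.points (j + 1) - d₂.points j < δ) :
    ∀ i, i < (d₁.append d₂).n → (d₁.append d₂).points (i + 1) - (d₁.append d₂).points i < δ := by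
  refine d₁.forall_lt_append_n d₂ (fun i hi => ?_) (fun j hj => ?_)
  · rw [append_points_of_le _ _ hi, append_points_of_le _ _ hi.le]
    exact hd₁ i hi
  · rw [add_assoc, append_points_add, append_points_add]
    exact hd₂ j hj

lemma append_tags {c₁ c₂ : ℕ → ℝ}
    (hc₁ : ∀ i, i < d₁.n → c₁ i ∈ Icc (d₁.points i) (d₁.points (i + 1)))
    (hc₂ : ∀ j, j < d₂.n → c₂ j ∈ Icc (d₂.points j) (d₂.points (j + 1))) :
    ∀ i, i < (d₁.append d₂).n → (if i < d₁.n then c₁ i else c₂ (i - d₁.n))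
      ∈ Icc ((d₁.append d₂).points i) ((d₁.append d₂).points (i + 1)) := by
  refine d₁.forall_lt_append_n d₂ (fun i hi => ?_) (fun j hj => ?_)
  · rw [append_points_of_le _ _ hi, append_points_of_le _ _ hi.le, if_pos hi]
    exact hc₁ i hi
  · rw [add_assoc, append_points_add, append_points_add, if_neg (by omega),
      Nat.add_sub_cancel_left]
    exact hc₂ j hj

end Append

section RiemannSum

variable {X : Type*} [AddCommGroup X] [Module ℝ X]

noncomputable def riemannSum (d : IntervalPartition a b) (F : ℝ → X) (c : ℕ → ℝ) : X :=
  ∑ i ∈ Finset.range d.n, (d.points (i + 1) - d.points i) • F (c i)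

lemma riemannSum_append {c : ℝ} (d₁ : IntervalPartition a c) (d₂ : IntervalPartition c b)
    (F : ℝ → X) (c₁ c₂ : ℕ → ℝ) :
    (d₁.append d₂).riemannSum F (fun i => if i < d₁.n then c₁ i else c₂ (i - d₁.n))
      = d₁.riemannSum F c₁ + d₂.riemannSum F c₂ := by
  rw [riemannSum, show (d₁.append d₂).n = d₁.n + d₂.n from rfl, Finset.sum_range_add]
  congr 1
  · refine Finset.sum_congr rfl fun i hi => ?_
    rw [Finset.mem_range] at hi
    rw [append_points_of_le _ _ hi, append_points_of_le _ _ hi.le, if_pos hi]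
  · refine Finset.sum_congr rfl fun j _ => ?_
    rw [add_assoc, append_points_add, append_points_add, if_neg (by omega),
      Nat.add_sub_cancel_left]

noncomputable def overlap (d e : IntervalPartition a b) (i j : ℕ) : ℝ :=
  max 0 (min (d.points (i + 1)) (e.points (j + 1)) - max (d.points i) (e.points j))

lemma overlap_comm (d e : IntervalPartition a b) (i j : ℕ) : d.overlap e i j = e.overlap d j i := by
  rw [overlap, overlap, min_comm (d.points (i + 1)), max_comm (d.points i)]

lemma overlap_nonneg (d e : IntervalPartition a b) (i j : ℕ) : 0 ≤ d.overlap e i j :=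
  le_max_left _ _

lemma overlap_eq_sub (d e : IntervalPartition a b) {i j : ℕ} (hi : i < d.n) (hj : j < e.n) :
    d.overlap e i j = max (d.points i) (min (d.points (i + 1)) (e.points (j + 1)))
      - max (d.points i) (min (d.points (i + 1)) (e.points j)) := by
  have hd := d.increasing i hi
  have he := e.increasing j hj
  simp only [overlap, min_def, max_def]
  split_ifs <;> linarith

lemma sum_overlap (d e : IntervalPartition a b) {i : ℕ} (hi : i < d.n) :
    ∑ j ∈ Finset.range e.n, d.overlap e i j = d.points (i + 1) - d.points i := by
  rw [Finset.sum_congr rfl fun j hj => d.overlap_eq_sub e hi (Finset.mem_range.mp hj),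
    Finset.sum_range_sub (fun j => max (d.points i) (min (d.points (i + 1)) (e.points j))),
    e.last_eq, e.first_eq, min_eq_left (d.points_le_right hi), max_eq_right (d.increasing i hi).le,
    min_eq_right ((d.left_le_points hi.le).trans (d.increasing i hi).le),
    max_eq_left (d.left_le_points hi.le)]

lemma abs_sub_lt_of_overlap_pos (d e : IntervalPartition a b) {i j : ℕ} {s t : ℝ}
    (hpos : 0 < d.overlap e i j) (hs : s ∈ Icc (d.points i) (d.points (i + 1)))
    (ht : t ∈ Icc (e.points j) (e.points (j + 1))) :
    |s - t| < (d.points (i + 1) - d.points i) + (e.points (j + 1) - e.points j) := by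
  simp only [overlap, lt_max_iff, lt_irrefl, false_or, sub_pos, max_lt_iff, lt_min_iff] at hpos
  rw [abs_sub_lt_iff]
  constructor <;> linarith [hs.1, hs.2, ht.1, ht.2]

/-- Both sums are rewritten over the common refinement of `d` and `e`, whose pieces have
lengths `d.overlap e i j`. -/
lemma seminorm_riemannSum_sub_le (q : Seminorm ℝ X) {F : ℝ → X} (d e : IntervalPartition a b)
    {c c' : ℕ → ℝ} (hc : ∀ i, i < d.n → c i ∈ Icc (d.points i) (d.points (i + 1)))
    (hc' : ∀ j, j < e.n → c' j ∈ Icc (e.points j) (e.points (j + 1))) {δ ε : ℝ}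
    (hd : ∀ i, i < d.n → d.points (i + 1) - d.points i < δ)
    (he : ∀ j, j < e.n → e.points (j + 1) - e.points j < δ)
    (hF : ∀ s ∈ Icc a b, ∀ t ∈ Icc a b, |s - t| < 2 * δ → q (F s - F t) ≤ ε) :
    q (d.riemannSum F c - e.riemannSum F c') ≤ (b - a) * ε := by
  have hsplit : d.riemannSum F c - e.riemannSum F c' = ∑ i ∈ Finset.range d.n,
      ∑ j ∈ Finset.range e.n, d.overlap e i j • (F (c i) - F (c' j)) := by
    have hd : d.riemannSum F c = ∑ i ∈ Finset.range d.n,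
        ∑ j ∈ Finset.range e.n, d.overlap e i j • F (c i) :=
      Finset.sum_congr rfl fun i hi => by
        rw [← Finset.sum_smul, d.sum_overlap e (Finset.mem_range.mp hi)]
    have he : e.riemannSum F c' = ∑ i ∈ Finset.range d.n,
        ∑ j ∈ Finset.range e.n, d.overlap e i j • F (c' j) := by
      rw [Finset.sum_comm]
      refine Finset.sum_congr rfl fun j hj => ?_
      simp only [overlap_comm d e, ← Finset.sum_smul, e.sum_overlap d (Finset.mem_range.mp hj)]
    simp only [hd, he, ← Finset.sum_sub_distrib, smul_sub]
  have hterm : ∀ i ∈ Finset.range d.n, ∀ j ∈ Finset.range e.n,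
      q (d.overlap e i j • (F (c i) - F (c' j))) ≤ d.overlap e i j * ε := by
    intro i hi j hj
    rw [Finset.mem_range] at hi hj
    rw [map_smul_eq_mul, Real.norm_of_nonneg (d.overlap_nonneg e i j)]
    rcases (d.overlap_nonneg e i j).eq_or_lt with h0 | hpos
    · simp [← h0]
    refine mul_le_mul_of_nonneg_left (hF _ (d.mem_Icc_of_mem_piece hi (hc i hi)) _
      (e.mem_Icc_of_mem_piece hj (hc' j hj)) ?_) hpos.le
    linarith [d.abs_sub_lt_of_overlap_pos e hpos (hc i hi) (hc' j hj), hd i hi, he j hj]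
  have hsubadd := Finset.le_sum_of_subadditive (ι := ℕ) q (map_zero q).le (map_add_le_add q)
  calc q (d.riemannSum F c - e.riemannSum F c')
      ≤ ∑ i ∈ Finset.range d.n, ∑ j ∈ Finset.range e.n, d.overlap e i j * ε := by
        rw [hsplit]
        refine (hsubadd _ _).trans (Finset.sum_le_sum fun i hi => ?_)
        exact (hsubadd _ _).trans (Finset.sum_le_sum (hterm i hi))
    _ = (b - a) * ε := by
        simp only [← Finset.sum_mul]
        rw [Finset.sum_congr rfl fun i hi => d.sum_overlap e (Finset.mem_range.mp hi),
          Finset.sum_range_sub d.points, d.last_eq, d.first_eq]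

end RiemannSum

end IntervalPartition

section Seminorms

variable {X : Type*} [AddCommGroup X] [Module ℝ X] [UniformSpace X] [IsUniformAddGroup X]
  [ContinuousSMul ℝ X] [LocallyConvexSpace ℝ X]

lemma tendsto_of_forall_seminorm {ι : Type*} {l : Filter ι} {u : ι → X} {y : X}
    (h : ∀ q : Seminorm ℝ X, Continuous q → ∀ ε > 0, ∀ᶠ i in l, q (u i - y) < ε) :
    Tendsto u l (𝓝 y) :=
  (with_gaugeSeminormFamily.tendsto_nhds u y).2 fun s =>
    h _ (with_gaugeSeminormFamily.continuous_seminorm s)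

lemma eq_of_forall_seminorm_lt [T2Space X] {x y : X}
    (h : ∀ q : Seminorm ℝ X, Continuous q → ∀ ε > 0, q (x - y) < ε) : x = y :=
  tendsto_nhds_unique (tendsto_const_nhds (f := (⊤ : Filter Unit)))
    (tendsto_of_forall_seminorm fun q hq ε hε => Eventually.of_forall fun _ => h q hq ε hε)

lemma cauchySeq_of_forall_seminorm {u : ℕ → X}
    (h : ∀ q : Seminorm ℝ X, Continuous q → ∀ ε > 0, ∃ N, ∀ m ≥ N, ∀ n ≥ N, q (u m - u n) < ε) :
    CauchySeq u := by
  rw [cauchySeq_iff_tendsto, uniformity_eq_comap_nhds_zero, tendsto_comap_iff]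
  refine tendsto_of_forall_seminorm fun q hq ε hε => ?_
  obtain ⟨N, hN⟩ := h q hq ε hε
  filter_upwards [eventually_ge_atTop (N, N)] with p hp
  simpa using hN p.2 hp.2 p.1 hp.1

end Seminorms

section Oscillation

variable {X : Type*} [AddCommGroup X] [Module ℝ X] [UniformSpace X] [IsUniformAddGroup X]

lemma ContinuousOn.exists_seminorm_sub_lt {F : ℝ → X} {a b : ℝ} (hF : ContinuousOn F (Icc a b))
    {q : Seminorm ℝ X} (hq : Continuous q) {ε : ℝ} (hε : 0 < ε) :
    ∃ δ > 0, ∀ s ∈ Icc a b, ∀ t ∈ Icc a b, |s - t| < δ → q (F s - F t) < ε := by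
  have hV : {p : X × X | q (p.2 - p.1) < ε} ∈ uniformity X := by
    rw [uniformity_eq_comap_nhds_zero]
    exact preimage_mem_comap ((isOpen_lt hq continuous_const).mem_nhds (by simpa using hε))
  have hU := mem_inf_principal.1 (isCompact_Icc.uniformContinuousOn_of_continuous hF hV)
  obtain ⟨δ, hδ, hδU⟩ := Metric.mem_uniformity_dist.1 hU
  exact ⟨δ, hδ, fun s hs t ht hst => hδU (by rwa [Real.dist_eq, abs_sub_comm]) ⟨ht, hs⟩⟩

end Oscillation

section RiemannIntegral

variable {X : Type*} [AddCommGroup X] [Module ℝ X] [UniformSpace X] {F G : ℝ → X} {a b : ℝ} {y : X}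

open IntervalPartition

lemma isRiemannIntegral_self (F : ℝ → X) (a : ℝ) : IsRiemannIntegral F a a 0 := by
  intro q _ ε hε
  refine ⟨1, one_pos, fun d c _ _ => ?_⟩
  simp [d.n_eq_zero le_rfl, hε]

lemma IsRiemannIntegral.congr (h : IsRiemannIntegral F a b y) (hFG : EqOn F G (Icc a b)) :
    IsRiemannIntegral G a b y := by
  intro q hq ε hε
  obtain ⟨δ, hδ, H⟩ := h q hq ε hε
  refine ⟨δ, hδ, fun d c hd hc => ?_⟩
  have hsum : d.riemannSum G c = d.riemannSum F c :=
    Finset.sum_congr rfl fun i hi => by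
      rw [Finset.mem_range] at hi
      rw [hFG (d.mem_Icc_of_mem_piece hi (hc i hi))]
  show q (d.riemannSum G c - y) < ε
  rw [hsum]
  exact H d c hd hc

lemma riemannIntegral_congr (h : EqOn F G (Icc a b)) :
    riemannIntegral F a b = riemannIntegral G a b := by
  have hFG : IsRiemannIntegral F a b = IsRiemannIntegral G a b :=
    funext fun y => propext ⟨fun hF => hF.congr h, fun hG => hG.congr h.symm⟩
  simp only [riemannIntegral, hFG]

lemma IsRiemannIntegral.mapL {Y : Type*} [AddCommGroup Y] [Module ℝ Y] [UniformSpace Y]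
    (h : IsRiemannIntegral F a b y) (L : X →L[ℝ] Y) :
    IsRiemannIntegral (fun s => L (F s)) a b (L y) := by
  intro q hq ε hε
  obtain ⟨δ, hδ, H⟩ := h (q.comp L.toLinearMap) (hq.comp L.continuous) ε hε
  refine ⟨δ, hδ, fun d c hd hc => ?_⟩
  simpa [map_sum, map_smul] using H d c hd hc

lemma IsRiemannIntegral.of_comp_add_right {r : ℝ}
    (h : IsRiemannIntegral (fun s => F (s + r)) (a - r) (b - r) y) :
    IsRiemannIntegral F a b y := by
  intro q hq ε hε
  obtain ⟨δ, hδ, H⟩ := h q hq ε hε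
  refine ⟨δ, hδ, fun d c hd hc => ?_⟩
  let d' : IntervalPartition (a - r) (b - r) :=
    ⟨d.n, fun i => d.points i - r, by rw [d.first_eq], by rw [d.last_eq],
      fun i hi => by linarith [d.increasing i hi]⟩
  have := H d' (fun i => c i - r) (fun i hi => by simpa [d'] using hd i hi)
    (fun i hi => by simpa [d'] using hc i hi)
  simpa [d'] using this

variable [IsUniformAddGroup X]

lemma ContinuousOn.exists_seminorm_riemannSum_sub_lt (hF : ContinuousOn F (Icc a b))
    {q : Seminorm ℝ X} (hq : Continuous q) {ε : ℝ} (hε : 0 < ε) :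
    ∃ δ > 0, ∀ (d e : IntervalPartition a b) (c c' : ℕ → ℝ),
      (∀ i, i < d.n → d.points (i + 1) - d.points i < δ) →
      (∀ i, i < d.n → c i ∈ Icc (d.points i) (d.points (i + 1))) →
      (∀ j, j < e.n → e.points (j + 1) - e.points j < δ) →
      (∀ j, j < e.n → c' j ∈ Icc (e.points j) (e.points (j + 1))) →
      q (d.riemannSum F c - e.riemannSum F c') < ε := by
  have hε' : 0 < ε / (|b - a| + 1) := by positivity
  have hlt : (b - a) * (ε / (|b - a| + 1)) < ε :=
    calc (b - a) * (ε / (|b - a| + 1)) ≤ |b - a| * (ε / (|b - a| + 1)) :=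
          mul_le_mul_of_nonneg_right (le_abs_self _) hε'.le
      _ < (|b - a| + 1) * (ε / (|b - a| + 1)) := by linarith
      _ = ε := mul_div_cancel₀ _ (by positivity)
  obtain ⟨δ, hδ, hosc⟩ := hF.exists_seminorm_sub_lt hq hε'
  refine ⟨δ / 2, half_pos hδ, fun d e c c' hd hc he hc' => ?_⟩
  refine (d.seminorm_riemannSum_sub_le q e hc hc' hd he fun s hs t ht hst => ?_).trans_lt hlt
  exact (hosc s hs t ht (by linarith)).le

variable [ContinuousSMul ℝ X] [LocallyConvexSpace ℝ X]

/-- Riemann sums over uniform partitions form a Cauchy sequence, whose limit is the integral. -/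
lemma ContinuousOn.exists_isRiemannIntegral (hX : SequentiallyComplete X) (hab : a ≤ b)
    (hF : ContinuousOn F (Icc a b)) : ∃ y, IsRiemannIntegral F a b y := by
  rcases hab.eq_or_lt with rfl | hlt
  · exact ⟨0, isRiemannIntegral_self F a⟩
  set P : ℕ → IntervalPartition a b := fun k => uniform hlt (k + 1) k.succ_pos
  have hPtags : ∀ k i, i < (P k).n → (P k).points i ∈ Icc ((P k).points i) ((P k).points (i + 1)) :=
    fun k i hi => ⟨le_rfl, ((P k).increasing i hi).le⟩
  obtain ⟨y, hy⟩ := hX (fun k => (P k).riemannSum F (P k).points) <|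
    cauchySeq_of_forall_seminorm fun q hq ε hε => by
      obtain ⟨δ, hδ, H⟩ := hF.exists_seminorm_riemannSum_sub_lt hq hε
      obtain ⟨N, hN⟩ := eventually_atTop.1 (eventually_uniform_mesh_lt hlt hδ)
      exact ⟨N, fun m hm n hn => H _ _ _ _ (fun i _ => hN m hm i) (hPtags m)
        (fun i _ => hN n hn i) (hPtags n)⟩
  refine ⟨y, fun q hq ε hε => ?_⟩
  obtain ⟨δ, hδ, H⟩ := hF.exists_seminorm_riemannSum_sub_lt hq (half_pos hε)
  have hclose : ∀ᶠ k in atTop, q ((P k).riemannSum F (P k).points - y) < ε / 2 :=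
    hy ((isOpen_lt (hq.comp (continuous_sub_right y)) continuous_const).mem_nhds
      (by simpa using half_pos hε))
  obtain ⟨k, hk, hmesh⟩ := (hclose.and (eventually_uniform_mesh_lt hlt hδ)).exists
  refine ⟨δ, hδ, fun d c hd hc => ?_⟩
  show q (d.riemannSum F c - y) < ε
  calc q (d.riemannSum F c - y)
      ≤ q (d.riemannSum F c - (P k).riemannSum F (P k).points)
        + q ((P k).riemannSum F (P k).points - y) := by
        rw [← sub_add_sub_cancel (d.riemannSum F c) ((P k).riemannSum F (P k).points) y]
        exact map_add_le_add q _ _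
    _ < ε / 2 + ε / 2 := add_lt_add (H d (P k) c _ hd hc (fun i _ => hmesh i) (hPtags k)) hk
    _ = ε := add_halves ε

variable [T2Space X]

lemma IsRiemannIntegral.unique {y' : X} (hab : a ≤ b) (h : IsRiemannIntegral F a b y)
    (h' : IsRiemannIntegral F a b y') : y = y' := by
  refine eq_of_forall_seminorm_lt fun q hq ε hε => ?_
  obtain ⟨δ, hδ, H⟩ := h q hq (ε / 2) (half_pos hε)
  obtain ⟨δ', hδ', H'⟩ := h' q hq (ε / 2) (half_pos hε)
  obtain ⟨d, c, hd, hc⟩ := exists_mesh_lt hab (lt_min hδ hδ')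
  have e : q (d.riemannSum F c - y) < ε / 2 :=
    H d c (fun i hi => (hd i hi).trans_le (min_le_left _ _)) hc
  have e' : q (d.riemannSum F c - y') < ε / 2 :=
    H' d c (fun i hi => (hd i hi).trans_le (min_le_right _ _)) hc
  calc q (y - y') = q ((d.riemannSum F c - y') - (d.riemannSum F c - y)) := by
        congr 1; abel
    _ ≤ q (d.riemannSum F c - y') + q (d.riemannSum F c - y) := map_sub_le_add q _ _
    _ < ε := by linarith

lemma IsRiemannIntegral.riemannIntegral_eq (hab : a ≤ b) (h : IsRiemannIntegral F a b y) :
    riemannIntegral F a b = y := by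
  have hex : ∃ y, IsRiemannIntegral F a b y := ⟨y, h⟩
  rw [riemannIntegral, dif_pos hex]
  exact hex.choose_spec.unique hab h

lemma IsRiemannIntegral.eq_add {c : ℝ} {y₁ y₂ : X} (hac : a ≤ c) (hcb : c ≤ b)
    (h₁ : IsRiemannIntegral F a c y₁) (h₂ : IsRiemannIntegral F c b y₂)
    (h : IsRiemannIntegral F a b y) : y = y₁ + y₂ := by
  refine eq_of_forall_seminorm_lt fun q hq ε hε => ?_
  obtain ⟨δ, hδ, H⟩ := h q hq (ε / 3) (by positivity)
  obtain ⟨δ₁, hδ₁, H₁⟩ := h₁ q hq (ε / 3) (by positivity)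
  obtain ⟨δ₂, hδ₂, H₂⟩ := h₂ q hq (ε / 3) (by positivity)
  have hη : 0 < min δ (min δ₁ δ₂) := lt_min hδ (lt_min hδ₁ hδ₂)
  obtain ⟨d₁, c₁, hd₁, hc₁⟩ := exists_mesh_lt hac hη
  obtain ⟨d₂, c₂, hd₂, hc₂⟩ := exists_mesh_lt hcb hη
  set S₁ := d₁.riemannSum F c₁
  set S₂ := d₂.riemannSum F c₂
  have e : q (S₁ + S₂ - y) < ε / 3 := by
    rw [← riemannSum_append]
    exact H _ _ (fun i hi => (d₁.append_mesh_lt d₂ hd₁ hd₂ i hi).trans_le (min_le_left _ _))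
      (d₁.append_tags d₂ hc₁ hc₂)
  have e₁ : q (S₁ - y₁) < ε / 3 :=
    H₁ d₁ c₁ (fun i hi => (hd₁ i hi).trans_le ((min_le_right _ _).trans (min_le_left _ _))) hc₁
  have e₂ : q (S₂ - y₂) < ε / 3 :=
    H₂ d₂ c₂ (fun i hi => (hd₂ i hi).trans_le ((min_le_right _ _).trans (min_le_right _ _))) hc₂
  calc q (y - (y₁ + y₂)) = q ((S₁ - y₁) + (S₂ - y₂) - (S₁ + S₂ - y)) := by
        congr 1; abel
    _ ≤ q (S₁ - y₁) + q (S₂ - y₂) + q (S₁ + S₂ - y) :=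
        (map_sub_le_add q _ _).trans (by gcongr; exact map_add_le_add q _ _)
    _ < ε := by linarith

end RiemannIntegral

section Generator

variable {X : Type*} [AddCommGroup X] [Module ℝ X] [UniformSpace X] {T : ℝ → X →L[ℝ] X}
  {x x' y y' : X}

def HasGenerator (T : ℝ → X →L[ℝ] X) (x y : X) : Prop :=
  Tendsto (fun t : ℝ => t⁻¹ • (T t x - x)) (𝓝[>] 0) (𝓝 y)

lemma HasGenerator.mem_genDomain (h : HasGenerator T x y) : x ∈ genDomain T := ⟨y, h⟩

lemma hasGenerator_generator (hx : x ∈ genDomain T) : HasGenerator T x (generator T x) := by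
  rw [generator, dif_pos]
  exacts [Exists.choose_spec _, hx]

lemma HasGenerator.generator_eq [T2Space X] (h : HasGenerator T x y) : generator T x = y :=
  tendsto_nhds_unique (hasGenerator_generator h.mem_genDomain) h

lemma HasGenerator.add [IsUniformAddGroup X] (h : HasGenerator T x y)
    (h' : HasGenerator T x' y') : HasGenerator T (x + x') (y + y') := by
  simpa only [HasGenerator, map_add, add_sub_add_comm, smul_add] using Tendsto.add h h'

lemma HasGenerator.apply_semigroup
    (hsg : ∀ s t : ℝ, 0 ≤ s → 0 ≤ t → T (s + t) = (T s).comp (T t)) {τ : ℝ} (hτ : 0 ≤ τ)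
    (h : HasGenerator T x y) : HasGenerator T (T τ x) (T τ y) := by
  refine (((T τ).continuous.tendsto y).comp h).congr' ?_
  filter_upwards [self_mem_nhdsWithin] with t (ht : 0 < t)
  have hcomm : T τ (T t x) = T t (T τ x) := by
    rw [← ContinuousLinearMap.comp_apply, ← ContinuousLinearMap.comp_apply, ← hsg τ t hτ ht.le,
      ← hsg t τ ht.le hτ, add_comm]
  simp [hcomm]

end Generator

section Convolution

variable {X : Type*} [AddCommGroup X] [Module ℝ X] [UniformSpace X] {T : ℝ → X →L[ℝ] X}
  {f g : ℝ → X} {t : ℝ}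

lemma sgConv_congr (h : EqOn f g (Icc 0 t)) : sgConv T f t = sgConv T g t :=
  riemannIntegral_congr fun s hs => by simp only [h hs]

variable [IsUniformAddGroup X] [ContinuousSMul ℝ X] [LocallyConvexSpace ℝ X]

/-- Local equicontinuity bounds `T (t - s) (f s - f s₀)` by `C p (f s - f s₀)`, and strong
continuity handles `T (t - s) (f s₀)`. -/
lemma IsSCLESemigroup.continuousOn_convolution_integrand (hT : IsSCLESemigroup T) (ht : 0 ≤ t)
    (hf : ContinuousOn f (Icc 0 t)) : ContinuousOn (fun s => T (t - s) (f s)) (Icc 0 t) := by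
  obtain ⟨-, -, hcont, hequicont⟩ := hT
  intro s₀ hs₀
  refine tendsto_of_forall_seminorm fun q hq ε hε => ?_
  obtain ⟨p, hp, C, -, hCp⟩ := hequicont q hq t ht
  have hmaps : MapsTo (fun s => t - s) (Icc 0 t) (Ici 0) := fun s hs => by
    simp only [mem_Ici, sub_nonneg, hs.2]
  have hbound : ContinuousWithinAt
      (fun s => C * p (f s - f s₀) + q (T (t - s) (f s₀) - T (t - s₀) (f s₀))) (Icc 0 t) s₀ := by
    refine ContinuousWithinAt.add (continuousWithinAt_const.mul ?_) ?_
    · exact hp.continuousAt.comp_continuousWithinAt ((hf s₀ hs₀).sub continuousWithinAt_const)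
    · refine hq.continuousAt.comp_continuousWithinAt (ContinuousWithinAt.sub ?_
        continuousWithinAt_const)
      exact ((hcont (f s₀)).comp (continuousOn_const.sub continuousOn_id) hmaps) s₀ hs₀
  filter_upwards [hbound.eventually_lt continuousWithinAt_const (by simpa using hε),
    self_mem_nhdsWithin] with s hs hsI
  calc q (T (t - s) (f s) - T (t - s₀) (f s₀))
      = q (T (t - s) (f s - f s₀) + (T (t - s) (f s₀) - T (t - s₀) (f s₀))) := by
        congr 1
        rw [map_sub]
        abel
    _ ≤ C * p (f s - f s₀) + q (T (t - s) (f s₀) - T (t - s₀) (f s₀)) :=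
        (map_add_le_add q _ _).trans
          (add_le_add (hCp _ ⟨sub_nonneg.2 hsI.2, by linarith [hsI.1]⟩ _) le_rfl)
    _ < ε := hs

variable [T2Space X]

lemma IsSCLESemigroup.isRiemannIntegral_sgConv (hT : IsSCLESemigroup T)
    (hX : SequentiallyComplete X) (ht : 0 ≤ t) (hf : ContinuousOn f (Icc 0 t)) :
    IsRiemannIntegral (fun s => T (t - s) (f s)) 0 t (sgConv T f t) := by
  obtain ⟨y, hy⟩ := (hT.continuousOn_convolution_integrand ht hf).exists_isRiemannIntegral hX ht
  rwa [sgConv, hy.riemannIntegral_eq ht]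

lemma IsSCLESemigroup.sgConv_eq_add (hT : IsSCLESemigroup T) (hX : SequentiallyComplete X)
    {ρ : ℝ} (hρ : 0 ≤ ρ) (hρt : ρ ≤ t) (hf : ContinuousOn f (Icc 0 t)) :
    sgConv T f t = T (t - ρ) (sgConv T f ρ) + sgConv T (fun σ => f (σ + ρ)) (t - ρ) := by
  have h₁ : IsRiemannIntegral (fun s => T (t - s) (f s)) 0 ρ (T (t - ρ) (sgConv T f ρ)) := by
    refine ((hT.isRiemannIntegral_sgConv hX hρ (hf.mono (Icc_subset_Icc_right hρt))).mapL
      (T (t - ρ))).congr fun s hs => ?_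
    dsimp only
    rw [← ContinuousLinearMap.comp_apply, ← hT.2.1 _ _ (by linarith) (by linarith [hs.2]),
      sub_add_sub_cancel]
  have h₂ : IsRiemannIntegral (fun s => T (t - s) (f s)) ρ t
      (sgConv T (fun σ => f (σ + ρ)) (t - ρ)) := by
    have hshift : ContinuousOn (fun σ => f (σ + ρ)) (Icc 0 (t - ρ)) :=
      hf.comp (continuous_add_const ρ).continuousOn fun σ hσ =>
        ⟨by linarith [hσ.1], by linarith [hσ.2]⟩
    refine IsRiemannIntegral.of_comp_add_right (r := ρ) ?_
    rw [sub_self]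
    refine (hT.isRiemannIntegral_sgConv hX (by linarith) hshift).congr fun σ _ => ?_
    simp only [sub_add_eq_sub_sub_swap]
  exact IsRiemannIntegral.eq_add hρ hρt h₁ h₂ (hT.isRiemannIntegral_sgConv hX (hρ.trans hρt) hf)

end Convolution

section MaximalRegularity

variable {X U : Type*} [AddCommGroup X] [Module ℝ X] [UniformSpace X] [AddCommGroup U]
  [Module ℝ U] [UniformSpace U] {T : ℝ → X →L[ℝ] X} {B : U →L[ℝ] X}

lemma CMaxReg.mono {r₁ r₂ : ℝ} (h : CMaxReg T B r₂) (hr₁ : 0 ≤ r₁) (h12 : r₁ ≤ r₂) :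
    CMaxReg T B r₁ := by
  intro f hf
  obtain ⟨hdom, hcont⟩ := h (fun s => f (min s r₁)) <|
    hf.comp (continuous_id.min continuous_const).continuousOn fun s hs =>
      ⟨le_min hs.1 hr₁, min_le_right _ _⟩
  have heq : ∀ t ∈ Icc 0 r₁,
      sgConv T (fun s => B (f (min s r₁))) t = sgConv T (fun s => B (f s)) t := fun t ht =>
    sgConv_congr fun s hs => by simp only [min_eq_left (hs.2.trans ht.2)]
  refine ⟨fun t ht => heq t ht ▸ hdom t ⟨ht.1, ht.2.trans h12⟩, ?_⟩
  exact (hcont.mono (Icc_subset_Icc_right h12)).congr fun t ht => by simp only [heq t ht]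

variable [IsUniformAddGroup X] [ContinuousSMul ℝ X] [LocallyConvexSpace ℝ X] [T2Space X]

lemma CMaxReg.two_mul (hX : SequentiallyComplete X) (hT : IsSCLESemigroup T) {ρ : ℝ}
    (hρ : 0 ≤ ρ) (h : CMaxReg T B ρ) : CMaxReg T B (2 * ρ) := by
  intro f hf
  have hBf : ContinuousOn (fun s => B (f s)) (Icc 0 (2 * ρ)) := B.continuous.comp_continuousOn hf
  obtain ⟨hdom₁, hcont₁⟩ := h f (hf.mono (Icc_subset_Icc_right (by linarith)))
  obtain ⟨hdom₂, hcont₂⟩ := h (fun σ => f (σ + ρ)) <|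
    hf.comp (continuous_add_const ρ).continuousOn fun σ hσ =>
      ⟨by linarith [hσ.1], by linarith [hσ.2]⟩
  have hgen : ∀ t ∈ Icc ρ (2 * ρ), HasGenerator T (sgConv T (fun s => B (f s)) t)
      (T (t - ρ) (generator T (sgConv T (fun s => B (f s)) ρ))
        + generator T (sgConv T (fun σ => B (f (σ + ρ))) (t - ρ))) := by
    intro t ht
    rw [hT.sgConv_eq_add hX hρ ht.1 (hBf.mono (Icc_subset_Icc_right ht.2))]
    refine ((hasGenerator_generator (hdom₁ ρ ⟨hρ, le_rfl⟩)).apply_semigroup hT.2.1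
      (by linarith [ht.1])).add (hasGenerator_generator (hdom₂ (t - ρ) ?_))
    constructor <;> linarith [ht.1, ht.2]
  refine ⟨fun t ht => ?_, ?_⟩
  · rcases le_total t ρ with htρ | hρt
    · exact hdom₁ t ⟨ht.1, htρ⟩
    · exact (hgen t ⟨hρt, ht.2⟩).mem_genDomain
  · have hsub : MapsTo (fun t => t - ρ) (Icc ρ (2 * ρ)) (Icc 0 ρ) := fun t ht =>
      ⟨by linarith [ht.1], by linarith [ht.2]⟩
    have hshift : MapsTo (fun t => t - ρ) (Icc ρ (2 * ρ)) (Ici 0) := fun t ht => (hsub ht).1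
    rw [← Icc_union_Icc_eq_Icc hρ (by linarith)]
    refine hcont₁.union_of_isClosed (ContinuousOn.congr ?_ fun t ht => (hgen t ht).generator_eq)
      isClosed_Icc isClosed_Icc
    exact ((hT.2.2.1 _).comp (continuous_sub_right ρ).continuousOn hshift).add
      (hcont₂.comp (continuous_sub_right ρ).continuousOn hsub)

end MaximalRegularity

theorem stmt11_general {X U : Type*} [AddCommGroup X] [Module ℝ X] [UniformSpace X] [IsUniformAddGroup X]
    [ContinuousSMul ℝ X] [LocallyConvexSpace ℝ X] [T2Space X]
    [AddCommGroup U] [Module ℝ U] [UniformSpace U]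
    (hX : SequentiallyComplete X)
    (T : ℝ → X →L[ℝ] X) (hT : IsSCLESemigroup T)
    (B : U →L[ℝ] X)
    (r : ℝ) (hr : 0 < r) (hmr : CMaxReg T B r) :
    ∀ r' : ℝ, 0 < r' → CMaxReg T B r' := by
  intro r' hr'
  have hpow : ∀ k : ℕ, CMaxReg T B (2 ^ k * r) := by
    intro k
    induction k with
    | zero => simpa using hmr
    | succ k ih =>
      rw [pow_succ, mul_comm _ 2, mul_assoc]
      exact ih.two_mul hX hT (by positivity)
  obtain ⟨k, hk⟩ := pow_unbounded_of_one_lt (r' / r) one_lt_two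
  exact (hpow k).mono hr'.le ((div_lt_iff₀ hr).1 hk).le

theorem stmt11 {X U : Type*} [AddCommGroup X] [Module ℝ X] [UniformSpace X] [IsUniformAddGroup X]
    [ContinuousSMul ℝ X] [LocallyConvexSpace ℝ X] [T2Space X]
    [AddCommGroup U] [Module ℝ U] [UniformSpace U] [IsUniformAddGroup U]
    [ContinuousSMul ℝ U] [LocallyConvexSpace ℝ U] [T2Space U]
    (hX : SequentiallyComplete X)
    (T : ℝ → X →L[ℝ] X) (hT : IsSCLESemigroup T)
    (B : U →L[ℝ] X)
    (r : ℝ) (hr : 0 < r) (hmr : CMaxReg T B r) :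
    ∀ r' : ℝ, 0 < r' → CMaxReg T B r' :=
  stmt11_general hX T hT B r hr hmr
end

section
/- Let X and U be Hausdorff locally convex spaces, B ∈ L(U;X) and (T(t))_{t≥0} a semigroup on X. If the family (T(t)B)_{t∈[0,r]} is of bounded semivariation for some r > 0, then it is of bounded semivariation for all r > 0. -/
open Filter Topology Set Classical
open scoped ENNReal

/-! A partition of `[a, c]` splits at any `b ∈ (a, c)` into partitions of `[a, b]` and `[b, c]`
(inserting `b` if necessary), so semivariation is subadditive over adjacent intervals. On
`[τ, τ + r]` the semigroup law gives `T(t)B = T(τ) T(t - τ)B`, so the semivariation there with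
respect to `q` is bounded by the one on `[0, r]` with respect to the continuous seminorm `q ∘ T(τ)`.
Induction then yields bounded semivariation on `[0, (N + 1) r]` for every `N`, and it restricts to
subintervals `[0, r']`. -/

namespace IntervalPartition

variable {a b c : ℝ}

theorem strictMonoOn (d : IntervalPartition a b) : StrictMonoOn d.points (Iic d.n) :=
  strictMonoOn_Iic_of_lt_succ fun m hm => by simpa using d.increasing m hm

theorem points_mem_Icc (d : IntervalPartition a b) {j : ℕ} (hj : j ≤ d.n) :
    d.points j ∈ Icc a b := by
  have h0 := d.strictMonoOn.monotoneOn (Nat.zero_le d.n) hj (Nat.zero_le j)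
  have h1 := d.strictMonoOn.monotoneOn hj (le_refl d.n) hj
  exact ⟨d.first_eq.symm.le.trans h0, h1.trans d.last_eq.le⟩

theorem exists_points_lt_le (d : IntervalPartition a c) (hab : a < b) (hbc : b ≤ c) :
    ∃ k < d.n, d.points k < b ∧ b ≤ d.points (k + 1) := by
  have hbn : b ≤ d.points d.n := hbc.trans d.last_eq.ge
  have hex : ∃ j, b ≤ d.points j := ⟨d.n, hbn⟩
  obtain ⟨k, hk⟩ : ∃ k, Nat.find hex = k + 1 := by
    refine Nat.exists_eq_succ_of_ne_zero fun h => ?_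
    have := Nat.find_spec hex
    rw [h, d.first_eq] at this
    linarith
  refine ⟨k, ?_, lt_of_not_ge (Nat.find_min hex (by omega)), hk ▸ Nat.find_spec hex⟩
  have := Nat.find_min' hex hbn
  omega

def sub (d : IntervalPartition a b) (τ : ℝ) : IntervalPartition (a - τ) (b - τ) where
  n := d.n
  points i := d.points i - τ
  first_eq := by rw [d.first_eq]
  last_eq := by rw [d.last_eq]
  increasing i hi := sub_lt_sub_right (d.increasing i hi) τ

def cutAbove (d : IntervalPartition a c) (k : ℕ) (hk : k ≤ d.n) (hb : d.points k < b) :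
    IntervalPartition a b where
  n := k + 1
  points i := if i ≤ k then d.points i else b
  first_eq := by simp [d.first_eq]
  last_eq := by simp
  increasing i hi := by
    rcases Nat.lt_or_ge i k with h | h
    · rw [if_pos h.le, if_pos (Nat.succ_le_of_lt h)]
      exact d.increasing i (by omega)
    · obtain rfl : i = k := by omega
      simpa using hb

def cutBelow (d : IntervalPartition a c) (k : ℕ) (hk : k < d.n) (hb : b < d.points (k + 1)) :
    IntervalPartition b c where
  n := d.n - k
  points i := if i = 0 then b else d.points (k + i)
  first_eq := rfl
  last_eq := by rw [if_neg (by omega), Nat.add_sub_cancel' hk.le, d.last_eq]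
  increasing i hi := by
    rcases i with _ | i
    · simpa using hb
    · simpa [show k + (i + 1 + 1) = k + (i + 1) + 1 by omega] using
        d.increasing (k + (i + 1)) (by omega)

end IntervalPartition

section StieltjesSum

variable {X Y : Type*} [AddCommGroup X] [Module ℝ X] [TopologicalSpace X]
  [AddCommGroup Y] [Module ℝ Y] [TopologicalSpace Y] {α : ℝ → X →L[ℝ] Y}

def stieltjesSum (α : ℝ → X →L[ℝ] Y) (t : ℕ → ℝ) (n : ℕ) (x : ℕ → X) : Y :=
  ∑ i ∈ Finset.range n, (α (t (i + 1)) (x i) - α (t i) (x i))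

theorem stieltjesSum_succ (t : ℕ → ℝ) (n : ℕ) (x : ℕ → X) :
    stieltjesSum α t (n + 1) x = stieltjesSum α t n x + (α (t (n + 1)) (x n) - α (t n) (x n)) :=
  Finset.sum_range_succ _ _

theorem stieltjesSum_add (t : ℕ → ℝ) (m n : ℕ) (x : ℕ → X) :
    stieltjesSum α t (m + n) x =
      stieltjesSum α t m x + stieltjesSum α (fun i => t (m + i)) n (fun i => x (m + i)) :=
  Finset.sum_range_add _ _ _

theorem stieltjesSum_congr {t t' : ℕ → ℝ} {n : ℕ} {x x' : ℕ → X}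
    (ht : ∀ i ≤ n, t i = t' i) (hx : ∀ i < n, x i = x' i) :
    stieltjesSum α t n x = stieltjesSum α t' n x' :=
  Finset.sum_congr rfl fun i hi => by
    rw [Finset.mem_range] at hi
    rw [ht i hi.le, ht (i + 1) hi, hx i hi]

variable {a b c : ℝ}

theorem IntervalPartition.exists_stieltjesSum_eq_add (d : IntervalPartition a c) (x : ℕ → X)
    (hab : a < b) (hbc : b < c) :
    ∃ (dl : IntervalPartition a b) (dr : IntervalPartition b c) (m : ℕ),
      dl.n ≤ d.n ∧ m + dr.n = d.n ∧
      stieltjesSum α d.points d.n x =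
        stieltjesSum α dl.points dl.n x + stieltjesSum α dr.points dr.n (fun i => x (m + i)) := by
  obtain ⟨k, hkn, hk, hk1⟩ := d.exists_points_lt_le hab hbc.le
  set tail := stieltjesSum α (fun i => d.points (k + 1 + i)) (d.n - (k + 1)) (fun i => x (k + 1 + i))
  have hsum : stieltjesSum α d.points d.n x = stieltjesSum α d.points k x +
      (α (d.points (k + 1)) (x k) - α (d.points k) (x k)) + tail := by
    conv_lhs => rw [show d.n = k + 1 + (d.n - (k + 1)) by omega]
    rw [stieltjesSum_add, stieltjesSum_succ]
  let dl := d.cutAbove k hkn.le hk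
  have hdl : stieltjesSum α dl.points dl.n x =
      stieltjesSum α d.points k x + (α b (x k) - α (d.points k) (x k)) := by
    have hinit : stieltjesSum α dl.points k x = stieltjesSum α d.points k x :=
      stieltjesSum_congr (fun i hi => if_pos hi) fun _ _ => rfl
    rw [show dl.n = k + 1 from rfl, stieltjesSum_succ, hinit]
    simp [dl, IntervalPartition.cutAbove]
  -- If `b` is a partition point, the right part restarts at index `k + 1`; otherwise `b` is
  -- inserted between `d.points k` and `d.points (k + 1)`, and `x k` is used on both sides of it.
  rcases hk1.eq_or_lt with heq | hlt
  · have hk2 : k + 1 < d.n := by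
      by_contra h
      have : d.points (k + 1) = c := by rw [show k + 1 = d.n by omega, d.last_eq]
      linarith
    let dr := d.cutBelow (k + 1) hk2 (heq ▸ d.increasing (k + 1) hk2)
    refine ⟨dl, dr, k + 1, hkn, Nat.add_sub_cancel' hk2.le, ?_⟩
    have hdr : stieltjesSum α dr.points dr.n (fun i => x (k + 1 + i)) = tail := by
      refine stieltjesSum_congr (fun i _ => ?_) fun _ _ => rfl
      rcases i with _ | i
      · simpa [dr, IntervalPartition.cutBelow] using heq
      · simp [dr, IntervalPartition.cutBelow]
    rw [hsum, hdl, hdr, heq]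
  · let dr := d.cutBelow k hkn hlt
    refine ⟨dl, dr, k, hkn, Nat.add_sub_cancel' hkn.le, ?_⟩
    have hdr : stieltjesSum α dr.points dr.n (fun i => x (k + i)) =
        (α (d.points (k + 1)) (x k) - α b (x k)) + tail := by
      rw [show dr.n = 1 + (d.n - (k + 1)) by change d.n - k = _; omega,
        stieltjesSum_add]
      congr 1
      · simp [stieltjesSum, dr, IntervalPartition.cutBelow]
      · refine stieltjesSum_congr (fun i _ => ?_) fun i _ => by rw [add_assoc]
        simp [dr, IntervalPartition.cutBelow, add_assoc, add_comm 1 i]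
    rw [hsum, hdl, hdr]
    abel

end StieltjesSum

section Semivariation

variable {X Y Z : Type*} [AddCommGroup X] [Module ℝ X] [UniformSpace X]
  [AddCommGroup Y] [Module ℝ Y] [UniformSpace Y] [AddCommGroup Z] [Module ℝ Z] [UniformSpace Z]
  {α : ℝ → X →L[ℝ] Y} {q : Seminorm ℝ Y} {p : Seminorm ℝ X} {a b c : ℝ}

theorem le_SV (d : IntervalPartition a b) {x : ℕ → X} (hx : ∀ i, i < d.n → p (x i) ≤ 1) :
    ENNReal.ofReal (q (stieltjesSum α d.points d.n x)) ≤ SV α q p a b :=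
  le_iSup₂_of_le d x (le_iSup_of_le hx le_rfl)

theorem SV_le {C : ℝ≥0∞}
    (h : ∀ (d : IntervalPartition a b) (x : ℕ → X), (∀ i, i < d.n → p (x i) ≤ 1) →
      ENNReal.ofReal (q (stieltjesSum α d.points d.n x)) ≤ C) :
    SV α q p a b ≤ C :=
  iSup₂_le fun d x => iSup_le (h d x)

theorem SV_anti_right {p' : Seminorm ℝ X} (h : p ≤ p') : SV α q p' a b ≤ SV α q p a b :=
  SV_le fun d _ hx => le_SV d fun i hi => (h _).trans (hx i hi)

theorem SV_mono_right {b' : ℝ} (hb : b' ≤ b) : SV α q p a b' ≤ SV α q p a b := by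
  rcases hb.eq_or_lt with rfl | hb
  · exact le_rfl
  refine SV_le fun d x hx => ?_
  let x' : ℕ → X := fun i => if i < d.n then x i else 0
  have hx' : ∀ i, i < d.n + 1 → p (x' i) ≤ 1 := fun i _ => by
    by_cases h : i < d.n
    · simpa [x', h] using hx i h
    · simp [x', h]
  have hsum : stieltjesSum α (d.cutAbove d.n le_rfl (d.last_eq ▸ hb)).points (d.n + 1) x' =
      stieltjesSum α d.points d.n x := by
    rw [stieltjesSum_succ]
    simp only [x', lt_irrefl, if_false, map_zero, sub_zero, add_zero]
    exact stieltjesSum_congr (fun i hi => if_pos hi) fun i hi => if_pos hi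
  rw [← hsum]
  exact le_SV _ hx'

theorem SV_le_add (hab : a < b) (hbc : b < c) :
    SV α q p a c ≤ SV α q p a b + SV α q p b c := by
  refine SV_le fun d x hx => ?_
  obtain ⟨dl, dr, m, hdl, hdr, hsum⟩ := d.exists_stieltjesSum_eq_add (α := α) x hab hbc
  calc ENNReal.ofReal (q (stieltjesSum α d.points d.n x))
      ≤ ENNReal.ofReal (q (stieltjesSum α dl.points dl.n x)) +
          ENNReal.ofReal (q (stieltjesSum α dr.points dr.n (fun i => x (m + i)))) := by
        rw [hsum]
        exact (ENNReal.ofReal_le_ofReal (map_add_le_add q _ _)).trans ENNReal.ofReal_add_le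
    _ ≤ SV α q p a b + SV α q p b c :=
        add_le_add (le_SV dl fun i hi => hx i (by omega))
          (le_SV dr fun i hi => hx (m + i) (by omega))

theorem SV_le_SV_comp_of_eq_comp_sub {β : ℝ → X →L[ℝ] Z} {A : Z →L[ℝ] Y} {τ : ℝ}
    (hαβ : ∀ t ∈ Icc a b, α t = A.comp (β (t - τ))) :
    SV α q p a b ≤ SV β (q.comp (A : Z →ₗ[ℝ] Y)) p (a - τ) (b - τ) := by
  refine SV_le fun d x hx => ?_
  have hsum : stieltjesSum α d.points d.n x = A (stieltjesSum β (d.sub τ).points d.n x) := by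
    simp only [stieltjesSum, map_sum, map_sub]
    refine Finset.sum_congr rfl fun i hi => ?_
    rw [Finset.mem_range] at hi
    rw [hαβ _ (d.points_mem_Icc hi), hαβ _ (d.points_mem_Icc hi.le)]
    rfl
  rw [hsum]
  exact le_SV (d.sub τ) hx

theorem BoundedSemivariation.mono_right {b' : ℝ} (h : BoundedSemivariation α a b)
    (hb : b' ≤ b) : BoundedSemivariation α a b' := fun q hq =>
  let ⟨p, hp, hfin⟩ := h q hq
  ⟨p, hp, (SV_mono_right hb).trans_lt hfin⟩

theorem BoundedSemivariation.trans (hab : a < b) (hbc : b < c) (h₁ : BoundedSemivariation α a b)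
    (h₂ : BoundedSemivariation α b c) : BoundedSemivariation α a c := by
  intro q hq
  obtain ⟨p₁, hp₁, hfin₁⟩ := h₁ q hq
  obtain ⟨p₂, hp₂, hfin₂⟩ := h₂ q hq
  refine ⟨p₁ ⊔ p₂, by rw [Seminorm.coe_sup]; exact hp₁.max hp₂, ?_⟩
  calc SV α q (p₁ ⊔ p₂) a c
      ≤ SV α q (p₁ ⊔ p₂) a b + SV α q (p₁ ⊔ p₂) b c := SV_le_add hab hbc
    _ ≤ SV α q p₁ a b + SV α q p₂ b c :=
        add_le_add (SV_anti_right le_sup_left) (SV_anti_right le_sup_right)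
    _ < ⊤ := ENNReal.add_lt_top.mpr ⟨hfin₁, hfin₂⟩

end Semivariation

theorem BoundedSemivariation.semigroup_shift {X U : Type*} [AddCommGroup X] [Module ℝ X]
    [UniformSpace X] [AddCommGroup U] [Module ℝ U] [UniformSpace U] {T : ℝ → X →L[ℝ] X}
    (hT : ∀ s t : ℝ, 0 ≤ s → 0 ≤ t → T (s + t) = (T s).comp (T t)) {B : U →L[ℝ] X}
    {r τ : ℝ} (hτ : 0 ≤ τ) (h : BoundedSemivariation (fun t => (T t).comp B) 0 r) :
    BoundedSemivariation (fun t => (T t).comp B) τ (τ + r) := by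
  intro q hq
  obtain ⟨p, hp, hfin⟩ := h (q.comp (T τ : X →ₗ[ℝ] X)) (hq.comp (T τ).continuous)
  refine ⟨p, hp, lt_of_le_of_lt ?_ hfin⟩
  have hshift : ∀ t ∈ Icc τ (τ + r), (T t).comp B = (T τ).comp ((T (t - τ)).comp B) := by
    intro t ht
    rw [← ContinuousLinearMap.comp_assoc, ← hT τ (t - τ) hτ (by linarith [ht.1]),
      add_sub_cancel]
  simpa using SV_le_SV_comp_of_eq_comp_sub (α := fun t => (T t).comp B)
    (β := fun t => (T t).comp B) (q := q) (p := p) hshift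

theorem stmt12_general {X U : Type*} [AddCommGroup X] [Module ℝ X] [UniformSpace X]
    [AddCommGroup U] [Module ℝ U] [UniformSpace U]
    (T : ℝ → X →L[ℝ] X)
    (hTsg : ∀ s t : ℝ, 0 ≤ s → 0 ≤ t → T (s + t) = (T s).comp (T t))
    (B : U →L[ℝ] X)
    (r : ℝ) (hr : 0 < r)
    (hsv : BoundedSemivariation (fun t => (T t).comp B) 0 r) :
    ∀ r' : ℝ, 0 < r' → BoundedSemivariation (fun t => (T t).comp B) 0 r' := by
  have hmul : ∀ N : ℕ, BoundedSemivariation (fun t => (T t).comp B) 0 ((N + 1) * r) := by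
    intro N
    induction N with
    | zero => simpa using hsv
    | succ N ih =>
      have hτ : 0 < ((N : ℝ) + 1) * r := by positivity
      rw [Nat.cast_succ, add_one_mul]
      exact ih.trans hτ (by linarith) (hsv.semigroup_shift hTsg hτ.le)
  intro r' _
  obtain ⟨N, hN⟩ := exists_nat_gt (r' / r)
  refine (hmul N).mono_right ?_
  rw [div_lt_iff₀ hr] at hN
  linarith

theorem stmt12 {X U : Type*} [AddCommGroup X] [Module ℝ X] [UniformSpace X] [IsUniformAddGroup X]
    [ContinuousSMul ℝ X] [LocallyConvexSpace ℝ X] [T2Space X]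
    [AddCommGroup U] [Module ℝ U] [UniformSpace U] [IsUniformAddGroup U]
    [ContinuousSMul ℝ U] [LocallyConvexSpace ℝ U] [T2Space U]
    (T : ℝ → X →L[ℝ] X)
    (hT0 : T 0 = ContinuousLinearMap.id ℝ X)
    (hTsg : ∀ s t : ℝ, 0 ≤ s → 0 ≤ t → T (s + t) = (T s).comp (T t))
    (B : U →L[ℝ] X)
    (r : ℝ) (hr : 0 < r)
    (hsv : BoundedSemivariation (fun t => (T t).comp B) 0 r) :
    ∀ r' : ℝ, 0 < r' → BoundedSemivariation (fun t => (T t).comp B) 0 r' :=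
  stmt12_general T hTsg B r hr hsv
end
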